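/- (Floquet normal form under uniform periodic steering.) Assume additionally that g is continuous and T-periodic for some T > 0, and define Γ(t) = ∫_0^t g(s)² ds, ℋ_t = c t H + Γ(t) δH, X = −(i/T)[ℋ_T, ·] + (Γ(T)/T) D, and P_t = exp( −i[ℋ_t − (t/T)ℋ_T, ·] + (Γ(t) − (t/T)Γ(T)) D ), with exp the exponential in the Banach algebra of linear maps on M_d(ℂ). Then the solution Λ_t = exp( −i[ℋ_t, ·] + Γ(t) D ) of the Master Equation factorizes as Λ_t = P_t ∘ e^{tX} for all t ∈ ℝ, and t ↦ P_t is T-periodic: P_{t+T} = P_t. -/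

import Mathlib

/-!
With `A = −i[H, ·]` and `K = −i[δH, ·] + D`, the hypotheses `[δH, H] = 0` and
`D ∘ [H, ·] = [H, ·] ∘ D` make `A` and `K` commute. The generator of `Λ_t` is `c t A + Γ(t) K`, that of `P_t` is
`(Γ(t) − (t/T) Γ(T)) K` (the `H`-parts cancel), and `t X = c t A + (t/T) Γ(T) K`; so the
factorization is `exp (x + y) = exp x * exp y` for commuting `x, y`. Periodicity of `P` reduces to
`Γ(t + T) = Γ(t) + Γ(T)`, which holds because `g²` is `T`-periodic.
-/

open Matrix

noncomputable section

attribute [local instance] Matrix.normedAddCommGroup Matrix.normedSpace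

def adL {n : Type*} [Fintype n] [DecidableEq n] (B : Matrix n n ℂ) :
    Matrix n n ℂ →L[ℂ] Matrix n n ℂ :=
  LinearMap.toContinuousLinearMap
    ((-Complex.I) • (LinearMap.mulLeft ℂ B - LinearMap.mulRight ℂ B))

instance instIsTopologicalRingMatrixCLM (d : ℕ) :
    IsTopologicalRing (Matrix (Fin d) (Fin d) ℂ →L[ℂ] Matrix (Fin d) (Fin d) ℂ) := by
  let _ : NormedRing (Matrix (Fin d) (Fin d) ℂ →L[ℂ] Matrix (Fin d) (Fin d) ℂ) :=
    ContinuousLinearMap.toNormedRing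
  exact NonUnitalSeminormedRing.toIsTopologicalRing

section Commutator

variable {n : Type*} [Fintype n] [DecidableEq n]

theorem adL_apply (B ρ : Matrix n n ℂ) : adL B ρ = -Complex.I • (B * ρ - ρ * B) := rfl

theorem adL_add (A B : Matrix n n ℂ) : adL (A + B) = adL A + adL B := by
  ext ρ : 1
  simp only [_root_.add_apply, adL_apply, add_mul, mul_add]
  module

theorem adL_smul (z : ℂ) (B : Matrix n n ℂ) : adL (z • B) = z • adL B := by
  ext ρ : 1
  simp only [_root_.smul_apply, adL_apply, smul_mul_assoc, mul_smul_comm]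
  module

theorem commute_adL_adL {A B : Matrix n n ℂ} (h : Commute A B) : Commute (adL A) (adL B) := by
  ext ρ : 1
  simp only [mul_apply_eq_comp, adL_apply, smul_sub, mul_sub, sub_mul,
    mul_smul_comm, smul_mul_assoc, mul_assoc]
  rw [← mul_assoc A B, h.eq, mul_assoc]
  module

theorem commute_adL_of_map_commutator {A : Matrix n n ℂ} {D : Matrix n n ℂ →L[ℂ] Matrix n n ℂ}
    (h : ∀ ρ, D (A * ρ - ρ * A) = A * D ρ - D ρ * A) : Commute (adL A) D := by
  ext ρ : 1
  rw [mul_apply_eq_comp, mul_apply_eq_comp, adL_apply, adL_apply, map_smul, h]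

theorem adL_smul_add_smul_add_smul (H δH : Matrix n n ℂ) (D : Matrix n n ℂ →L[ℂ] Matrix n n ℂ)
    (a b : ℂ) : adL (a • H + b • δH) + b • D = a • adL H + b • (adL δH + D) := by
  rw [adL_add, adL_smul, adL_smul, smul_add]
  abel

end Commutator

theorem Function.Periodic.intervalIntegral_zero_add {E : Type*} [NormedAddCommGroup E]
    [NormedSpace ℝ E] {f : ℝ → E} {T : ℝ} (hper : Function.Periodic f T) (hf : Continuous f)
    (t : ℝ) : ∫ s in (0 : ℝ)..t + T, f s = (∫ s in (0 : ℝ)..t, f s) + ∫ s in (0 : ℝ)..T, f s := by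
  rw [hper.intervalIntegral_add_eq_add 0 t hf.intervalIntegrable, zero_add]

section Exponential

variable {𝕜 𝔸 : Type*} [CommSemiring 𝕜] [NormedRing 𝔸] [Algebra 𝕜 𝔸] [NormedAlgebra ℚ 𝔸]
  [CompleteSpace 𝔸]

theorem exp_smul_add_add_smul_of_commute {A K : 𝔸} (h : Commute A K) (a b₁ b₂ : 𝕜) :
    NormedSpace.exp (a • A + (b₁ + b₂) • K) =
      NormedSpace.exp (b₁ • K) * NormedSpace.exp (a • A + b₂ • K) := by
  have hcomm : Commute (b₁ • K) (a • A + b₂ • K) :=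
    ((h.symm.smul_left b₁).smul_right a).add_right (((Commute.refl K).smul_left b₁).smul_right b₂)
  rw [← NormedSpace.exp_add_of_commute hcomm, add_smul, add_left_comm]

end Exponential

-- Restated for operators because instance search finds no `NormedAlgebra ℚ (E →L[ℂ] E)`.
theorem ContinuousLinearMap.exp_smul_add_add_smul_of_commute {E : Type*} [NormedAddCommGroup E]
    [NormedSpace ℂ E] [FiniteDimensional ℂ E] {A K : E →L[ℂ] E} (h : Commute A K)
    (a b₁ b₂ : ℂ) :
    NormedSpace.exp (a • A + (b₁ + b₂) • K) =
      NormedSpace.exp (b₁ • K) * NormedSpace.exp (a • A + b₂ • K) := by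
  let _ : NormedAlgebra ℚ (E →L[ℂ] E) := NormedAlgebra.restrictScalars ℚ ℂ _
  have _ : CompleteSpace (E →L[ℂ] E) := FiniteDimensional.complete ℂ _
  exact _root_.exp_smul_add_add_smul_of_commute h a b₁ b₂

theorem stmt17_general {d : ℕ}
    (H δH : Matrix (Fin d) (Fin d) ℂ)
    (hcomm : δH * H = H * δH)
    (D : Matrix (Fin d) (Fin d) ℂ →L[ℂ] Matrix (Fin d) (Fin d) ℂ)
    (hD : ∀ ρ, D (H * ρ - ρ * H) = H * D ρ - D ρ * H)
    (c : ℝ) (g : ℝ → ℝ) (hg : Continuous g)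
    (T : ℝ) (hT : 0 < T) (hper : Function.Periodic g T)
    (Γ : ℝ → ℝ) (hΓ : ∀ t, Γ t = ∫ s in (0:ℝ)..t, (g s) ^ 2)
    (Hcal : ℝ → Matrix (Fin d) (Fin d) ℂ)
    (hHcal : ∀ t, Hcal t = ((c * t : ℝ) : ℂ) • H + ((Γ t : ℝ) : ℂ) • δH)
    (Λ : ℝ → (Matrix (Fin d) (Fin d) ℂ →L[ℂ] Matrix (Fin d) (Fin d) ℂ))
    (hΛ : ∀ t, Λ t = NormedSpace.exp (adL (Hcal t) + ((Γ t : ℝ) : ℂ) • D))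
    (X : Matrix (Fin d) (Fin d) ℂ →L[ℂ] Matrix (Fin d) (Fin d) ℂ)
    (hX : X = adL (((T⁻¹ : ℝ) : ℂ) • Hcal T) + (((Γ T / T : ℝ)) : ℂ) • D)
    (P : ℝ → (Matrix (Fin d) (Fin d) ℂ →L[ℂ] Matrix (Fin d) (Fin d) ℂ))
    (hP : ∀ t, P t = NormedSpace.exp
      (adL (Hcal t - ((t / T : ℝ) : ℂ) • Hcal T) +
        (((Γ t - (t / T) * Γ T : ℝ)) : ℂ) • D)) :
    (∀ t : ℝ, Λ t = (P t).comp (NormedSpace.exp (t • X))) ∧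
    (∀ t : ℝ, P (t + T) = P t) := by
  have hT0 : (T : ℂ) ≠ 0 := Complex.ofReal_ne_zero.mpr hT.ne'
  set A := adL H
  set K := adL δH + D
  have hAK : Commute A K :=
    (commute_adL_adL hcomm).symm.add_right (commute_adL_of_map_commutator hD)
  have hΓ_add : ∀ t, Γ (t + T) = Γ t + Γ T := fun t => by
    simp only [hΓ]
    exact (hper.comp (· ^ 2)).intervalIntegral_zero_add (by fun_prop) t
  have hgen : ∀ a b : ℂ, adL (a • H + b • δH) + b • D = a • A + b • K :=
    adL_smul_add_smul_add_smul H δH D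
  clear_value A K
  have hP_exp : ∀ t, P t = NormedSpace.exp (((Γ t - t / T * Γ T : ℝ) : ℂ) • K) := by
    intro t
    rw [hP, ← zero_add (_ • K), ← zero_smul ℂ A, ← hgen, hHcal, hHcal]
    congr 3
    push_cast
    match_scalars
    · field_simp
      ring
    · field_simp
  have hX_eq : X = (c : ℂ) • A + ((Γ T / T : ℝ) : ℂ) • K := by
    rw [hX, ← hgen, hHcal]
    congr 2
    push_cast
    match_scalars <;> field_simp
  have hsplit : ∀ a b₁ b₂ : ℂ, NormedSpace.exp (a • A + (b₁ + b₂) • K) =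
      NormedSpace.exp (b₁ • K) * NormedSpace.exp (a • A + b₂ • K) :=
    ContinuousLinearMap.exp_smul_add_add_smul_of_commute hAK
  refine ⟨fun t => ?_, fun t => ?_⟩
  · rw [hΛ, hHcal, hgen, hP_exp, ← Complex.coe_smul t X, hX_eq, smul_add, smul_smul, smul_smul,
      ← ContinuousLinearMap.mul_def, ← hsplit]
    congr 3
    · push_cast
      ring
    · push_cast
      field_simp
      ring
  · rw [hP_exp, hP_exp, hΓ_add]
    congr 3
    field_simp
    ring

/-- Floquet normal form under uniform periodic steering: for continuous
`T`-periodic `g`, the solution `Λ_t = exp(−i[ℋ_t,·] + Γ(t)D)` factorizes as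
`Λ_t = P_t ∘ e^{tX}` with `X = −(i/T)[ℋ_T,·] + (Γ(T)/T)D`,
`P_t = exp(−i[ℋ_t − (t/T)ℋ_T,·] + (Γ(t) − (t/T)Γ(T))D)`, and `t ↦ P_t` is `T`-periodic. -/
theorem stmt17 {d : ℕ}
    (H δH : Matrix (Fin d) (Fin d) ℂ) (hH : Hᴴ = H) (hδH : δHᴴ = δH)
    (hcomm : δH * H = H * δH)
    (D : Matrix (Fin d) (Fin d) ℂ →L[ℂ] Matrix (Fin d) (Fin d) ℂ)
    (hD : ∀ ρ, D (H * ρ - ρ * H) = H * D ρ - D ρ * H)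
    (c : ℝ) (g : ℝ → ℝ) (hg : Continuous g)
    (T : ℝ) (hT : 0 < T) (hper : Function.Periodic g T)
    (Γ : ℝ → ℝ) (hΓ : ∀ t, Γ t = ∫ s in (0:ℝ)..t, (g s) ^ 2)
    (Hcal : ℝ → Matrix (Fin d) (Fin d) ℂ)
    (hHcal : ∀ t, Hcal t = ((c * t : ℝ) : ℂ) • H + ((Γ t : ℝ) : ℂ) • δH)
    (Λ : ℝ → (Matrix (Fin d) (Fin d) ℂ →L[ℂ] Matrix (Fin d) (Fin d) ℂ))
    (hΛ : ∀ t, Λ t = NormedSpace.exp (adL (Hcal t) + ((Γ t : ℝ) : ℂ) • D))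
    (X : Matrix (Fin d) (Fin d) ℂ →L[ℂ] Matrix (Fin d) (Fin d) ℂ)
    (hX : X = adL (((T⁻¹ : ℝ) : ℂ) • Hcal T) + (((Γ T / T : ℝ)) : ℂ) • D)
    (P : ℝ → (Matrix (Fin d) (Fin d) ℂ →L[ℂ] Matrix (Fin d) (Fin d) ℂ))
    (hP : ∀ t, P t = NormedSpace.exp
      (adL (Hcal t - ((t / T : ℝ) : ℂ) • Hcal T) +
        (((Γ t - (t / T) * Γ T : ℝ)) : ℂ) • D)) :
    (∀ t : ℝ, Λ t = (P t).comp (NormedSpace.exp (t • X))) ∧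
    (∀ t : ℝ, P (t + T) = P t) :=
  stmt17_general H δH hcomm D hD c g hg T hT hper Γ hΓ Hcal hHcal Λ hΛ X hX P hP
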